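/- Let u > 0 and Φ₁(z) = Φ(A_{u,1}; z). Then the derivative Φ₁′(z) < 1 for all z ∈ [0,1] if and only if u < √3. -/

import Mathlib

/-!
Writing `x = x_u` and `c = u²x²`, the defining equation of `x_u` is the quadratic `2u²x² + x = 1`,
so `c = (1 - x)/2` and the denominator of `Φ₁` is `x + c(1 - z)`. Hence
`Φ₁'(z) = c x / (x + c(1 - z))²` increases on `[0, 1]`, with maximum `Φ₁'(1) = c / x = (1 - x)/(2x)`.
This is `< 1` iff `x > 1/3`, and by the quadratic `x > 1/3` iff `u² < 3`.
-/

noncomputable def xu (u : ℝ) : ℝ := 2 / (1 + Real.sqrt (1 + 8 * u ^ 2))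

noncomputable def Phi1 (u z : ℝ) : ℝ := xu u / (1 - u ^ 2 * (xu u) ^ 2 * (z + 1))

section

variable (u : ℝ)

lemma xu_pos : 0 < xu u := by
  unfold xu
  positivity

lemma sq_mul_xu_sq : u ^ 2 * xu u ^ 2 = (1 - xu u) / 2 := by
  have hs : Real.sqrt (1 + 8 * u ^ 2) ^ 2 = 1 + 8 * u ^ 2 := Real.sq_sqrt (by positivity)
  have hden : 0 < 1 + Real.sqrt (1 + 8 * u ^ 2) := by positivity
  rw [xu]
  set s := Real.sqrt (1 + 8 * u ^ 2)
  field_simp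
  linear_combination (-1) * hs

lemma one_third_lt_xu_iff : 1 / 3 < xu u ↔ u ^ 2 < 3 := by
  have hx := xu_pos u
  have hq := sq_mul_xu_sq u
  -- `1 - x = 2u²x²`, so `u² < 3` iff `6x² + x - 1 = (3x - 1)(2x + 1) > 0`
  have hx2 : 0 < xu u ^ 2 := by positivity
  constructor
  · intro h
    have : 1 - xu u < 6 * xu u ^ 2 := by nlinarith
    nlinarith
  · intro h
    have : u ^ 2 * xu u ^ 2 < 3 * xu u ^ 2 := mul_lt_mul_of_pos_right h hx2
    nlinarith

lemma Phi1_denom_eq (z : ℝ) :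
    1 - u ^ 2 * xu u ^ 2 * (z + 1) = xu u + u ^ 2 * xu u ^ 2 * (1 - z) := by
  linear_combination (-2) * sq_mul_xu_sq u

lemma deriv_Phi1 {z : ℝ} (hz : z ≤ 1) :
    deriv (Phi1 u) z = u ^ 2 * xu u ^ 3 / (xu u + u ^ 2 * xu u ^ 2 * (1 - z)) ^ 2 := by
  have hD : 0 < xu u + u ^ 2 * xu u ^ 2 * (1 - z) := by
    have := xu_pos u
    have : 0 ≤ 1 - z := by linarith
    positivity
  have hPhi : Phi1 u = fun z => xu u / (xu u + u ^ 2 * xu u ^ 2 * (1 - z)) := by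
    ext z
    rw [Phi1, Phi1_denom_eq]
  have hdenom : HasDerivAt (fun z => xu u + u ^ 2 * xu u ^ 2 * (1 - z)) (-(u ^ 2 * xu u ^ 2)) z := by
    simpa using ((hasDerivAt_id z).const_sub 1).const_mul (u ^ 2 * xu u ^ 2) |>.const_add (xu u)
  rw [hPhi, ((hasDerivAt_const z (xu u)).fun_div hdenom hD.ne').deriv]
  ring

lemma deriv_Phi1_one : deriv (Phi1 u) 1 = (1 - xu u) / (2 * xu u) := by
  have hx := (xu_pos u).ne'
  rw [deriv_Phi1 u le_rfl, sub_self, mul_zero, add_zero]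
  field_simp
  linear_combination 2 * sq_mul_xu_sq u

lemma deriv_Phi1_le_deriv_one {z : ℝ} (hz : z ≤ 1) : deriv (Phi1 u) z ≤ deriv (Phi1 u) 1 := by
  have := xu_pos u
  rw [deriv_Phi1 u hz, deriv_Phi1 u le_rfl]
  have : 0 ≤ 1 - z := by linarith
  gcongr

end

theorem stmt_6 (u : ℝ) (hu : 0 < u) :
    (∀ z ∈ Set.Icc (0 : ℝ) 1, deriv (Phi1 u) z < 1) ↔ u < Real.sqrt 3 := by
  have hmax : (∀ z ∈ Set.Icc (0 : ℝ) 1, deriv (Phi1 u) z < 1) ↔ deriv (Phi1 u) 1 < 1 :=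
    ⟨fun h => h 1 ⟨zero_le_one, le_rfl⟩,
      fun h z hz => (deriv_Phi1_le_deriv_one u hz.2).trans_lt h⟩
  rw [hmax, deriv_Phi1_one, div_lt_one (mul_pos two_pos (xu_pos u)), Real.lt_sqrt hu.le,
    ← one_third_lt_xu_iff]
  constructor <;> intro h <;> linarith
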